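/- Let X ⊆ ℝ² be a polytope with exactly 2 vertices (extreme points), i.e., a nondegenerate closed segment. Then there exists a finite set D ⊆ ℝ² of directions with |D| ≤ 5 such that D determines X within the class of all polytopes in ℝ² having at most 2 extreme points. (Special case n̄ = n_v = 2: Algorithm 1 can be terminated after just 5 oracle calls.) -/

import Mathlib

open RealInnerProductSpace

/-!
Write `X = [a, b]` and `u = b - a`. A polytope with at most two extreme points is a segment
`[p, q]`, and its support function at `±d` records the maximum and the minimum of `⟪p, d⟫`,
`⟪q, d⟫`. For `d = ±u⊥` both values for `X` equal `⟪a, u⊥⟫`, which puts `p` and `q` on the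
line `ab`; for `d = ±u` the pair `(⟪p, u⟫, ⟪q, u⟫)` is then `(⟪a, u⟫, ⟪b, u⟫)` up to order,
and a point of `ℝ²` is determined by its inner products with `u` and `u⊥`. So the four
directions `±u, ±u⊥` suffice.
-/

/-- Support function of a subset of `ℝⁿ`. -/
noncomputable def supp {n : ℕ} (X : Set (EuclideanSpace ℝ (Fin n)))
    (d : EuclideanSpace ℝ (Fin n)) : ℝ :=
  sSup ((fun v => ⟪v, d⟫) '' X)

/-- `X` is a polytope: the convex hull of a nonempty finite set. -/
def IsPolytope {n : ℕ} (X : Set (EuclideanSpace ℝ (Fin n))) : Prop :=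
  ∃ F : Finset (EuclideanSpace ℝ (Fin n)), F.Nonempty ∧ X = convexHull ℝ (F : Set _)

/-- The finite direction set `D` determines `X` within the class `𝒞`. -/
def Determines {n : ℕ} (𝒞 : Set (Set (EuclideanSpace ℝ (Fin n))))
    (D : Finset (EuclideanSpace ℝ (Fin n))) (X : Set (EuclideanSpace ℝ (Fin n))) : Prop :=
  ∀ Y ∈ 𝒞, (∀ d ∈ D, supp Y d = supp X d) → Y = X

lemma eq_and_eq_or_eq_and_eq_of_max_eq_of_min_eq {α : Type*} [LinearOrder α] {x y a b : α}
    (hmax : max x y = max a b) (hmin : min x y = min a b) :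
    x = a ∧ y = b ∨ x = b ∧ y = a := by
  rcases le_total x y with hxy | hxy <;> rcases le_total a b with hab | hab <;> simp_all

section InnerProductSpace

variable {E : Type*} [NormedAddCommGroup E] [InnerProductSpace ℝ E]

lemma inner_eq_or_inner_eq_swap_of_max_inner_eq {p q a b w : E}
    (hw : max ⟪p, w⟫ ⟪q, w⟫ = max ⟪a, w⟫ ⟪b, w⟫)
    (hnw : max ⟪p, -w⟫ ⟪q, -w⟫ = max ⟪a, -w⟫ ⟪b, -w⟫) :
    ⟪p, w⟫ = ⟪a, w⟫ ∧ ⟪q, w⟫ = ⟪b, w⟫ ∨ ⟪p, w⟫ = ⟪b, w⟫ ∧ ⟪q, w⟫ = ⟪a, w⟫ := by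
  simp only [inner_neg_right, max_neg_neg, neg_inj] at hnw
  exact eq_and_eq_or_eq_and_eq_of_max_eq_of_min_eq hw hnw

lemma segment_eq_of_max_inner_eq {p q a b u v : E}
    (hsep : ∀ x y : E, ⟪x, u⟫ = ⟪y, u⟫ → ⟪x, v⟫ = ⟪y, v⟫ → x = y) (hab : ⟪a, v⟫ = ⟪b, v⟫)
    (h : ∀ d ∈ ({u, -u, v, -v} : Set E), max ⟪p, d⟫ ⟪q, d⟫ = max ⟪a, d⟫ ⟪b, d⟫) :
    segment ℝ p q = segment ℝ a b := by
  have hv : ⟪p, v⟫ = ⟪a, v⟫ ∧ ⟪q, v⟫ = ⟪a, v⟫ := by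
    rcases inner_eq_or_inner_eq_swap_of_max_inner_eq (h v (by simp)) (h (-v) (by simp))
      with ⟨hp, hq⟩ | ⟨hp, hq⟩
    · exact ⟨hp, hq.trans hab.symm⟩
    · exact ⟨hp.trans hab.symm, hq⟩
  rcases inner_eq_or_inner_eq_swap_of_max_inner_eq (h u (by simp)) (h (-u) (by simp))
    with ⟨hp, hq⟩ | ⟨hp, hq⟩
  · rw [hsep p a hp hv.1, hsep q b hq (hv.2.trans hab)]
  · rw [hsep p b hp (hv.1.trans hab), hsep q a hq hv.2, segment_symm]

end InnerProductSpace

lemma supp_segment {n : ℕ} (a b d : EuclideanSpace ℝ (Fin n)) :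
    supp (segment ℝ a b) d = max ⟪a, d⟫ ⟪b, d⟫ := by
  have himg : (fun v => ⟪v, d⟫) '' segment ℝ a b = segment ℝ ⟪a, d⟫ ⟪b, d⟫ := by
    simpa [real_inner_comm] using image_segment ℝ (innerₛₗ ℝ d).toAffineMap a b
  rw [supp, himg, segment_eq_uIcc, Set.uIcc, csSup_Icc inf_le_sup]

namespace IsPolytope

variable {n : ℕ} {Y : Set (EuclideanSpace ℝ (Fin n))}

lemma extremePoints_finite (hY : IsPolytope Y) : (Set.extremePoints ℝ Y).Finite := by
  obtain ⟨F, -, rfl⟩ := hY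
  exact F.finite_toSet.subset extremePoints_convexHull_subset

lemma extremePoints_nonempty (hY : IsPolytope Y) : (Set.extremePoints ℝ Y).Nonempty := by
  obtain ⟨F, hF, rfl⟩ := hY
  exact (F.finite_toSet.isCompact_convexHull ℝ).extremePoints_nonempty
    (hF.to_set.mono (subset_convexHull ℝ _))

lemma convexHull_extremePoints (hY : IsPolytope Y) :
    convexHull ℝ (Set.extremePoints ℝ Y) = Y := by
  rw [← (hY.extremePoints_finite.isClosed_convexHull ℝ).closure_eq]
  obtain ⟨F, -, rfl⟩ := hY
  exact closure_convexHull_extremePoints (F.finite_toSet.isCompact_convexHull ℝ)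
    (convex_convexHull ℝ _)

lemma exists_eq_segment (hY : IsPolytope Y) (hcard : (Set.extremePoints ℝ Y).ncard ≤ 2) :
    ∃ p q, Y = segment ℝ p q := by
  have hpos := (Set.ncard_pos hY.extremePoints_finite).2 hY.extremePoints_nonempty
  interval_cases h : (Set.extremePoints ℝ Y).ncard
  · obtain ⟨p, hp⟩ := Set.ncard_eq_one.1 h
    exact ⟨p, p, by rw [← hY.convexHull_extremePoints, hp, convexHull_singleton, segment_same]⟩
  · obtain ⟨p, q, -, hpq⟩ := Set.ncard_eq_two.1 h
    exact ⟨p, q, by rw [← hY.convexHull_extremePoints, hpq, convexHull_pair]⟩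

end IsPolytope

def perp (u : EuclideanSpace ℝ (Fin 2)) : EuclideanSpace ℝ (Fin 2) := !₂[-u 1, u 0]

lemma inner_self_perp (u : EuclideanSpace ℝ (Fin 2)) : ⟪u, perp u⟫ = 0 := by
  simp only [perp, PiLp.inner_apply, RCLike.inner_apply, Real.ringHom_apply, Fin.sum_univ_two,
    Matrix.cons_val_zero, Matrix.cons_val_one, Matrix.cons_val_fin_one]
  ring

lemma inner_sq_add_inner_perp_sq (z u : EuclideanSpace ℝ (Fin 2)) :
    ⟪z, u⟫ ^ 2 + ⟪z, perp u⟫ ^ 2 = ‖z‖ ^ 2 * ‖u‖ ^ 2 := by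
  simp only [perp, PiLp.inner_apply, RCLike.inner_apply, Real.ringHom_apply, Fin.sum_univ_two,
    Matrix.cons_val_zero, Matrix.cons_val_one, Matrix.cons_val_fin_one, EuclideanSpace.norm_sq_eq,
    Real.norm_eq_abs, sq_abs]
  ring

lemma eq_of_inner_eq_of_inner_perp_eq {u x y : EuclideanSpace ℝ (Fin 2)} (hu : u ≠ 0)
    (h : ⟪x, u⟫ = ⟪y, u⟫) (hperp : ⟪x, perp u⟫ = ⟪y, perp u⟫) : x = y := by
  rw [← sub_eq_zero, ← norm_eq_zero]
  have hlagrange := inner_sq_add_inner_perp_sq (x - y) u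
  rw [inner_sub_left, inner_sub_left, h, hperp, sub_self, sub_self] at hlagrange
  have hu' : ‖u‖ ^ 2 ≠ 0 := by positivity
  simpa [hu'] using hlagrange.symm

/-- a polytope `X ⊆ ℝ²` with exactly `2` vertices (a nondegenerate
segment) is determined by at most `5` directions within the class of polytopes
in `ℝ²` with at most `2` extreme points. -/
theorem stmt_5 (X : Set (EuclideanSpace ℝ (Fin 2))) (hX : IsPolytope X)
    (hcard : (Set.extremePoints ℝ X).ncard = 2) :
    ∃ D : Finset (EuclideanSpace ℝ (Fin 2)), D.card ≤ 5 ∧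
      Determines {Y | IsPolytope Y ∧ (Set.extremePoints ℝ Y).ncard ≤ 2} D X := by
  classical
  obtain ⟨a, b, hab, hext⟩ := Set.ncard_eq_two.1 hcard
  obtain rfl : X = segment ℝ a b := by
    rw [← hX.convexHull_extremePoints, hext, convexHull_pair]
  have hu : b - a ≠ 0 := sub_ne_zero.2 hab.symm
  have hab_perp : ⟪a, perp (b - a)⟫ = ⟪b, perp (b - a)⟫ := by
    rw [← sub_eq_zero, ← inner_sub_left, ← neg_sub, inner_neg_left, inner_self_perp, neg_zero]
  refine ⟨{b - a, -(b - a), perp (b - a), -perp (b - a)}, Finset.card_le_four.trans (by norm_num),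
    ?_⟩
  rintro Y ⟨hY, hYcard⟩ hsupp
  obtain ⟨p, q, rfl⟩ := hY.exists_eq_segment hYcard
  refine segment_eq_of_max_inner_eq (fun x y => eq_of_inner_eq_of_inner_perp_eq hu) hab_perp
    fun d hd => ?_
  simpa [supp_segment] using hsupp d (by simpa using hd)
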